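/- arXiv:1401.1251 — 3 statements merged into one kernel-verified Lean document; each statement's English description precedes it below -/
import Mathlib

section
/- There exists a constant C depending only on N₁, N₂, β₁, β₂ such that for every ε ∈ [0,1] and every radial solution (u₁,u₂) of the deformed one-point Chern–Simons system with parameter ε and exponents (β₁,β₂), writing u_i(x) = U_i(|x|), one has |r·U_i′(r)| ≤ C for all r > 0 and U_i(r) ≤ −2 ln r + C for all r ≥ 1, for i = 1,2. -/
open MeasureTheory Metric Filter

noncomputable section

/-- The Euclidean plane ℝ². -/
abbrev Plane := EuclideanSpace ℝ (Fin 2)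

/-- The Laplacian of `f : ℝ² → ℝ`. -/
noncomputable def lap (f : Plane → ℝ) (x : Plane) : ℝ :=
  ∑ i : Fin 2, iteratedFDeriv ℝ 2 f x (fun _ => EuclideanSpace.single i 1)

/-- A fixed unit vector in ℝ². -/
noncomputable def e₀ : Plane := EuclideanSpace.single 0 1

/-- A radial solution of the deformed one-point Chern–Simons system with parameter
`ε ∈ [0,1]` and exponents `(β₁, β₂)`: a pair `uᵢ(x) = 2εNᵢ ln|x| + vᵢ(x)` with `v₁, v₂`
radially symmetric and C², solving `Δv₁ + e^{u₂}(1 - e^{u₁}) = 0`,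
`Δv₂ + e^{u₁}(1 - e^{u₂}) = 0` on ℝ² (where `e^{uᵢ(x)} = |x|^{2εNᵢ} e^{vᵢ(x)}`,
extended continuously to `x = 0` via `rpow`), with `u₁, u₂ < 0` off the origin and
`uᵢ(x) + 2βᵢ ln|x|` bounded on `{|x| ≥ 1}`. -/
structure RadSol (N₁ N₂ : ℕ) (β₁ β₂ ε : ℝ) : Type where
  v₁ : Plane → ℝ
  v₂ : Plane → ℝ
  cd₁ : ContDiff ℝ 2 v₁
  cd₂ : ContDiff ℝ 2 v₂
  rad₁ : ∀ x y : Plane, ‖x‖ = ‖y‖ → v₁ x = v₁ y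
  rad₂ : ∀ x y : Plane, ‖x‖ = ‖y‖ → v₂ x = v₂ y
  pde₁ : ∀ x : Plane, lap v₁ x +
    (‖x‖ ^ (2 * ε * (N₂ : ℝ)) * Real.exp (v₂ x)) *
      (1 - ‖x‖ ^ (2 * ε * (N₁ : ℝ)) * Real.exp (v₁ x)) = 0
  pde₂ : ∀ x : Plane, lap v₂ x +
    (‖x‖ ^ (2 * ε * (N₁ : ℝ)) * Real.exp (v₁ x)) *
      (1 - ‖x‖ ^ (2 * ε * (N₂ : ℝ)) * Real.exp (v₂ x)) = 0
  neg₁ : ∀ x : Plane, x ≠ 0 → 2 * ε * (N₁ : ℝ) * Real.log ‖x‖ + v₁ x < 0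
  neg₂ : ∀ x : Plane, x ≠ 0 → 2 * ε * (N₂ : ℝ) * Real.log ‖x‖ + v₂ x < 0
  asymp₁ : ∃ C : ℝ, ∀ x : Plane, 1 ≤ ‖x‖ →
    |2 * ε * (N₁ : ℝ) * Real.log ‖x‖ + v₁ x + 2 * β₁ * Real.log ‖x‖| ≤ C
  asymp₂ : ∃ C : ℝ, ∀ x : Plane, 1 ≤ ‖x‖ →
    |2 * ε * (N₂ : ℝ) * Real.log ‖x‖ + v₂ x + 2 * β₂ * Real.log ‖x‖| ≤ C

open Real Set Topology

/-!
Write `U` for the radial profile of `u₁` and `f(r) = r U'(r)`. In polar coordinates the first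
equation reads `f' = -r e^{u₂} (1 - e^{u₁}) ≤ 0`, so `f` decreases from `f(0⁺) = 2εN₁ ≤ 2N₁`.
Since `U - c log r` is monotone wherever `f - c` has a sign and `U = -2β₁ log r + O(1)` at
infinity, `f ≥ -2β₁` and `f → -2β₁`; this bounds `|r U'|`. The Pohozaev quantity
`f₁ f₂ + r² (e^{u₁} + e^{u₂} - e^{u₁} e^{u₂})` has derivative
`2r (e^{u₁} + e^{u₂} - e^{u₁} e^{u₂}) ≥ 0` and tends to `4β₁β₂` because `r² e^{uᵢ} → 0` when
`βᵢ > 1`. Hence `r² e^{u₁} ≤ 4β₁β₂ + |f₁ f₂|`, which is the bound on `U₁`.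
-/

lemma antitoneOn_of_hasDerivAt_nonpos {D : Set ℝ} (hD : Convex ℝ D) {f f' : ℝ → ℝ}
    (hf : ∀ x ∈ D, HasDerivAt f (f' x) x) (hf' : ∀ x ∈ D, f' x ≤ 0) : AntitoneOn f D :=
  antitoneOn_of_hasDerivWithinAt_nonpos hD
    (fun x hx => (hf x hx).continuousAt.continuousWithinAt)
    (fun x hx => (hf x (interior_subset hx)).hasDerivWithinAt)
    fun x hx => hf' x (interior_subset hx)

lemma monotoneOn_of_hasDerivAt_nonneg {D : Set ℝ} (hD : Convex ℝ D) {f f' : ℝ → ℝ}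
    (hf : ∀ x ∈ D, HasDerivAt f (f' x) x) (hf' : ∀ x ∈ D, 0 ≤ f' x) : MonotoneOn f D :=
  monotoneOn_of_hasDerivWithinAt_nonneg hD
    (fun x hx => (hf x hx).continuousAt.continuousWithinAt)
    (fun x hx => (hf x (interior_subset hx)).hasDerivWithinAt)
    fun x hx => hf' x (interior_subset hx)

section LogScale

variable {U f : ℝ → ℝ}

lemma hasDerivAt_sub_mul_log {c r : ℝ} (hr : 0 < r) (hU : HasDerivAt U (f r / r) r) :
    HasDerivAt (fun r => U r - c * log r) ((f r - c) / r) r :=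
  (hU.sub ((hasDerivAt_log hr.ne').const_mul c)).congr_deriv (by ring)

lemma antitoneOn_sub_mul_log {a c : ℝ} (ha : 0 < a) (hU : ∀ r, a ≤ r → HasDerivAt U (f r / r) r)
    (hf : ∀ r, a ≤ r → f r ≤ c) : AntitoneOn (fun r => U r - c * log r) (Ici a) :=
  antitoneOn_of_hasDerivAt_nonpos (convex_Ici a)
    (fun r hr => hasDerivAt_sub_mul_log (ha.trans_le hr) (hU r hr))
    fun r hr => div_nonpos_of_nonpos_of_nonneg (sub_nonpos.2 (hf r hr)) (ha.trans_le hr).le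

lemma monotoneOn_sub_mul_log {a c : ℝ} (ha : 0 < a) (hU : ∀ r, a ≤ r → HasDerivAt U (f r / r) r)
    (hf : ∀ r, a ≤ r → c ≤ f r) : MonotoneOn (fun r => U r - c * log r) (Ici a) :=
  monotoneOn_of_hasDerivAt_nonneg (convex_Ici a)
    (fun r hr => hasDerivAt_sub_mul_log (ha.trans_le hr) (hU r hr))
    fun r hr => div_nonneg (sub_nonneg.2 (hf r hr)) (ha.trans_le hr).le

lemma nonpos_of_forall_mul_log_le {a K b₀ : ℝ} (h : ∀ b, b₀ ≤ b → a * log b ≤ K) : a ≤ 0 := by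
  by_contra! ha
  obtain ⟨b, hbK, hb₀⟩ := (((tendsto_log_atTop.const_mul_atTop ha).eventually_gt_atTop K).and
    (eventually_ge_atTop b₀)).exists
  exact (h b hb₀).not_gt hbK

variable {c C : ℝ} (hU : ∀ r, 0 < r → HasDerivAt U (f r / r) r) (hf : AntitoneOn f (Ioi 0))
  (hC : ∀ r, 1 ≤ r → |U r + c * log r| ≤ C)
include hU hf hC

lemma neg_le_of_antitoneOn {a : ℝ} (ha : 0 < a) : -c ≤ f a := by
  have hanti := antitoneOn_sub_mul_log (c := f a) ha (fun r hr => hU r (ha.trans_le hr))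
    fun r hr => hf ha (ha.trans_le hr) hr
  suffices -c - f a ≤ 0 by linarith
  refine nonpos_of_forall_mul_log_le (b₀ := max a 1) (K := U a - f a * log a + C) fun b hb => ?_
  have h₁ : U b - f a * log b ≤ U a - f a * log a :=
    hanti self_mem_Ici ((le_max_left a 1).trans hb) ((le_max_left a 1).trans hb)
  have h₂ := (abs_le.1 (hC b ((le_max_right a 1).trans hb))).1
  linarith

lemma tendsto_neg_of_antitoneOn : Tendsto f atTop (𝓝 (-c)) := by
  refine tendsto_order.2 ⟨fun x hx => ?_, fun x hx => ?_⟩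
  · filter_upwards [eventually_gt_atTop 0] with r hr
    exact hx.trans_le (neg_le_of_antitoneOn hU hf hC hr)
  obtain ⟨a, ha, hfa⟩ : ∃ a, 1 ≤ a ∧ f a < x := by
    by_contra! h
    have hmono := monotoneOn_sub_mul_log one_pos (fun r hr => hU r (one_pos.trans_le hr)) h
    suffices x + c ≤ 0 by linarith
    refine nonpos_of_forall_mul_log_le (b₀ := 1) (K := C - U 1) fun b hb => ?_
    have h₁ : U 1 - x * log 1 ≤ U b - x * log b := hmono self_mem_Ici hb hb
    have h₂ := (abs_le.1 (hC b hb)).2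
    rw [log_one, mul_zero, sub_zero] at h₁
    linarith
  filter_upwards [eventually_ge_atTop a] with r hr
  exact (hf (one_pos.trans_le ha) (one_pos.trans_le (ha.trans hr)) hr).trans_lt hfa

end LogScale

lemma tendsto_sq_mul_exp_of_add_mul_log_le {U : ℝ → ℝ} {c C : ℝ} (hc : 2 < c)
    (hC : ∀ r, 1 ≤ r → U r + c * log r ≤ C) :
    Tendsto (fun r => r ^ 2 * exp (U r)) atTop (𝓝 0) := by
  have hbound : Tendsto (fun r => C + (2 - c) * log r) atTop atBot :=
    tendsto_atBot_add_const_left _ C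
      (tendsto_log_atTop.const_mul_atTop_of_neg (by linarith))
  have hexponent : Tendsto (fun r => U r + 2 * log r) atTop atBot := by
    refine tendsto_atBot_mono' _ ?_ hbound
    filter_upwards [eventually_ge_atTop 1] with r hr
    linarith [hC r hr]
  refine (tendsto_exp_atBot.comp hexponent).congr' ?_
  filter_upwards [eventually_gt_atTop 0] with r hr
  rw [Function.comp_apply, exp_add, mul_comm 2, ← rpow_def_of_pos hr, rpow_two, mul_comm]

lemma iteratedFDeriv_two_apply_diag {E F : Type*} [NormedAddCommGroup E] [NormedSpace ℝ E]
    [NormedAddCommGroup F] [NormedSpace ℝ F] {f : E → F} (hf : ContDiff ℝ 2 f) (x w : E) :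
    iteratedFDeriv ℝ 2 f x (fun _ => w) = deriv (deriv fun t : ℝ => f (x + t • w)) 0 := by
  have hline : ContDiff ℝ 2 fun t : ℝ => x + t • w := by fun_prop
  have hd : deriv (fun t : ℝ => x + t • w) = fun _ => w := funext fun t => by
    simpa using (((hasDerivAt_id t).smul_const w).const_add x).deriv
  have h := iteratedDeriv_vcomp_two hf.contDiffAt hline.contDiffAt (x := 0)
  simp only [iteratedDeriv_succ, iteratedDeriv_zero, hd, deriv_const, map_zero, add_zero] at h
  simpa [Function.comp_def] using h.symm

lemma deriv_deriv_comp_sqrt_sq_add_sq {V : ℝ → ℝ} (hV : ContDiff ℝ 2 V) {r : ℝ} (hr : 0 < r) :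
    deriv (deriv fun t => V √(r ^ 2 + t ^ 2)) 0 = deriv V r / r := by
  set g : ℝ → ℝ := fun t => √(r ^ 2 + t ^ 2)
  have hg_pos (t : ℝ) : 0 < g t := by positivity
  have hg (t : ℝ) : HasDerivAt g (t / g t) t := by
    convert ((hasDerivAt_pow 2 t).const_add (r ^ 2)).sqrt (by positivity) using 1
    simp only [g]
    field_simp
    ring
  -- `(V ∘ g)' = h(t) t` with `h = V' ∘ g / g`, whose derivative at `0` is `h 0` whatever `h' 0` is
  have hdV : deriv (fun t => V (g t)) = fun t => deriv V (g t) / g t * t := funext fun t => by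
    have h : HasDerivAt (fun t => V (g t)) (deriv V (g t) * (t / g t)) t :=
      (hV.differentiable two_ne_zero (g t)).hasDerivAt.comp t (hg t)
    rw [h.deriv]
    ring
  have hquot : DifferentiableAt ℝ (fun t => deriv V (g t) / g t) 0 :=
    ((hV.differentiable_deriv_two _).comp 0 (hg 0).differentiableAt).div
      (hg 0).differentiableAt (hg_pos 0).ne'
  have h : HasDerivAt (fun t => deriv V (g t) / g t * t)
      (deriv (fun t => deriv V (g t) / g t) 0 * 0 + deriv V (g 0) / g 0 * 1) 0 :=
    hquot.hasDerivAt.mul (hasDerivAt_id' 0)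
  have hg0 : g 0 = r := by simp [g, sqrt_sq hr.le]
  rw [hdV, h.deriv, hg0]
  simp

def e₁ : Plane := EuclideanSpace.single 1 1

lemma ContDiff.comp_smul_e₀ {n : WithTop ℕ∞} {v : Plane → ℝ} (hv : ContDiff ℝ n v) :
    ContDiff ℝ n fun s : ℝ => v (s • e₀) :=
  hv.comp (contDiff_id.smul contDiff_const)

lemma norm_smul_e₀ (s : ℝ) : ‖s • e₀‖ = |s| := by
  simp [e₀, norm_smul]

lemma norm_smul_e₀_add_smul_e₁ (r t : ℝ) : ‖r • e₀ + t • e₁‖ = √(r ^ 2 + t ^ 2) := by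
  simp [EuclideanSpace.norm_eq, Fin.sum_univ_two, e₀, e₁]

lemma lap_smul_e₀_of_radial {v : Plane → ℝ} (hv : ContDiff ℝ 2 v)
    (hrad : ∀ x y : Plane, ‖x‖ = ‖y‖ → v x = v y) {r : ℝ} (hr : 0 < r) :
    lap v (r • e₀) = deriv (deriv fun s => v (s • e₀)) r + deriv (fun s => v (s • e₀)) r / r := by
  set V : ℝ → ℝ := fun s => v (s • e₀)
  have hV : ContDiff ℝ 2 V := hv.comp_smul_e₀
  have hradial : (fun t : ℝ => v (r • e₀ + t • e₀)) = fun t => V (r + t) := by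
    simp [V, add_smul]
  have htangential : (fun t : ℝ => v (r • e₀ + t • e₁)) = fun t => V √(r ^ 2 + t ^ 2) := by
    funext t
    refine hrad _ (√(r ^ 2 + t ^ 2) • e₀) ?_
    rw [norm_smul_e₀_add_smul_e₁, norm_smul_e₀, abs_of_nonneg (sqrt_nonneg _)]
  rw [lap, Fin.sum_univ_two, iteratedFDeriv_two_apply_diag hv, iteratedFDeriv_two_apply_diag hv]
  change deriv (deriv fun t => v (r • e₀ + t • e₀)) 0 +
    deriv (deriv fun t => v (r • e₀ + t • e₁)) 0 = _
  rw [hradial, htangential, deriv_deriv_comp_sqrt_sq_add_sq hV hr]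
  have h := iteratedDeriv_comp_const_add 2 V r
  simp only [iteratedDeriv_succ, iteratedDeriv_zero] at h
  simp [h]

lemma rpow_mul_exp {r : ℝ} (hr : 0 < r) (a b : ℝ) : r ^ a * exp b = exp (a * log r + b) := by
  rw [rpow_def_of_pos hr, ← exp_add, mul_comm]

def fluxBound (N : ℕ) (β : ℝ) : ℝ := max (2 * (N : ℝ)) (2 * β)

namespace RadSol

variable {N₁ N₂ : ℕ} {β₁ β₂ ε : ℝ} (sol : RadSol N₁ N₂ β₁ β₂ ε)

def swap : RadSol N₂ N₁ β₂ β₁ ε where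
  v₁ := sol.v₂
  v₂ := sol.v₁
  cd₁ := sol.cd₂
  cd₂ := sol.cd₁
  rad₁ := sol.rad₂
  rad₂ := sol.rad₁
  pde₁ := sol.pde₂
  pde₂ := sol.pde₁
  neg₁ := sol.neg₂
  neg₂ := sol.neg₁
  asymp₁ := sol.asymp₂
  asymp₂ := sol.asymp₁

@[simp] lemma swap_swap : sol.swap.swap = sol := rfl

/-- The radial profile `U₁(r) = u₁(r e₀)`. -/
def profile (r : ℝ) : ℝ := 2 * ε * N₁ * log r + sol.v₁ (r • e₀)

/-- `r U₁'(r)`, written so that it is defined, and continuous, at `r = 0` as well. -/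
def flux (r : ℝ) : ℝ := 2 * ε * N₁ + r * deriv (fun s => sol.v₁ (s • e₀)) r

lemma radial_ode {r : ℝ} (hr : 0 < r) :
    deriv (deriv fun s => sol.v₁ (s • e₀)) r + deriv (fun s => sol.v₁ (s • e₀)) r / r =
      -(exp (sol.swap.profile r) * (1 - exp (sol.profile r))) := by
  have h := sol.pde₁ (r • e₀)
  rw [lap_smul_e₀_of_radial sol.cd₁ sol.rad₁ hr, norm_smul_e₀, abs_of_pos hr, rpow_mul_exp hr,
    rpow_mul_exp hr] at h
  exact eq_neg_of_add_eq_zero_left h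

lemma hasDerivAt_profile {r : ℝ} (hr : 0 < r) : HasDerivAt sol.profile (sol.flux r / r) r := by
  have hV := sol.cd₁.comp_smul_e₀.differentiable two_ne_zero r
  refine (((hasDerivAt_log hr.ne').const_mul _).add hV.hasDerivAt).congr_deriv ?_
  simp only [flux]
  field_simp

lemma hasDerivAt_flux {r : ℝ} (hr : 0 < r) :
    HasDerivAt sol.flux (-(r * (exp (sol.swap.profile r) * (1 - exp (sol.profile r))))) r := by
  have hV' := sol.cd₁.comp_smul_e₀.differentiable_deriv_two r
  refine (((hasDerivAt_id' r).mul hV'.hasDerivAt).const_add _).congr_deriv ?_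
  calc 1 * deriv (fun s => sol.v₁ (s • e₀)) r + r * deriv (deriv fun s => sol.v₁ (s • e₀)) r
      = r * (deriv (deriv fun s => sol.v₁ (s • e₀)) r +
          deriv (fun s => sol.v₁ (s • e₀)) r / r) := by
        field_simp
        ring
    _ = _ := by rw [sol.radial_ode hr, mul_neg]

lemma continuous_flux : Continuous sol.flux :=
  continuous_const.add (continuous_id.mul
    (sol.cd₁.comp_smul_e₀.continuous_deriv one_le_two))

lemma profile_neg {r : ℝ} (hr : 0 < r) : sol.profile r < 0 := by
  have h := sol.neg₁ (r • e₀) (smul_ne_zero hr.ne' (by simp [e₀]))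
  rwa [norm_smul_e₀, abs_of_pos hr] at h

lemma exists_abs_profile_add_le : ∃ C, ∀ r, 1 ≤ r → |sol.profile r + 2 * β₁ * log r| ≤ C := by
  obtain ⟨C, hC⟩ := sol.asymp₁
  refine ⟨C, fun r hr => ?_⟩
  have hnorm : ‖r • e₀‖ = r := by rw [norm_smul_e₀, abs_of_pos (one_pos.trans_le hr)]
  have h := hC (r • e₀) (hnorm.symm ▸ hr)
  rwa [hnorm] at h

lemma antitoneOn_flux : AntitoneOn sol.flux (Ioi 0) :=
  antitoneOn_of_hasDerivAt_nonpos (convex_Ioi 0) (fun _ hr => sol.hasDerivAt_flux hr)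
    fun _ hr => neg_nonpos.2 (mul_nonneg (le_of_lt hr) (mul_nonneg (exp_pos _).le
      (sub_nonneg.2 (exp_le_one_iff.2 (sol.profile_neg hr).le))))

lemma flux_le (hε : ε ≤ 1) {r : ℝ} (hr : 0 < r) : sol.flux r ≤ 2 * N₁ := by
  have hflux : sol.flux r ≤ sol.flux 0 := by
    refine ge_of_tendsto (sol.continuous_flux.continuousWithinAt (s := Ioi 0) (x := 0)) ?_
    filter_upwards [Ioo_mem_nhdsGT hr] with s hs using sol.antitoneOn_flux hs.1 hr hs.2.le
  have hN : 2 * ε * N₁ ≤ 2 * N₁ := by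
    nlinarith [(Nat.cast_nonneg N₁ : (0 : ℝ) ≤ N₁)]
  have h₀ : sol.flux 0 = 2 * ε * N₁ := by simp [flux]
  exact (h₀ ▸ hflux).trans hN

lemma neg_le_flux {r : ℝ} (hr : 0 < r) : -(2 * β₁) ≤ sol.flux r := by
  obtain ⟨C, hC⟩ := sol.exists_abs_profile_add_le
  exact neg_le_of_antitoneOn (fun r hr => sol.hasDerivAt_profile hr) sol.antitoneOn_flux hC hr

lemma tendsto_flux : Tendsto sol.flux atTop (𝓝 (-(2 * β₁))) := by
  obtain ⟨C, hC⟩ := sol.exists_abs_profile_add_le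
  exact tendsto_neg_of_antitoneOn (fun r hr => sol.hasDerivAt_profile hr) sol.antitoneOn_flux hC

lemma abs_flux_le (hε : ε ≤ 1) {r : ℝ} (hr : 0 < r) :
    |sol.flux r| ≤ fluxBound N₁ β₁ :=
  abs_le.2 ⟨(neg_le_neg (le_max_right _ _)).trans (sol.neg_le_flux hr),
    (sol.flux_le hε hr).trans (le_max_left _ _)⟩

lemma tendsto_sq_mul_exp_profile (hβ₁ : 1 < β₁) :
    Tendsto (fun r => r ^ 2 * exp (sol.profile r)) atTop (𝓝 0) := by
  obtain ⟨C, hC⟩ := sol.exists_abs_profile_add_le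
  exact tendsto_sq_mul_exp_of_add_mul_log_le (by linarith) fun r hr => (abs_le.1 (hC r hr)).2

def pohozaev (r : ℝ) : ℝ :=
  sol.flux r * sol.swap.flux r + r ^ 2 * (exp (sol.profile r) + exp (sol.swap.profile r) -
    exp (sol.profile r) * exp (sol.swap.profile r))

lemma hasDerivAt_pohozaev {r : ℝ} (hr : 0 < r) :
    HasDerivAt sol.pohozaev (2 * r * (exp (sol.profile r) + exp (sol.swap.profile r) -
      exp (sol.profile r) * exp (sol.swap.profile r))) r := by
  have hE₁ := (sol.hasDerivAt_profile hr).exp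
  have hE₂ := (sol.swap.hasDerivAt_profile hr).exp
  have hf₂ := sol.swap.hasDerivAt_flux hr
  rw [swap_swap] at hf₂
  refine (((sol.hasDerivAt_flux hr).mul hf₂).add
    ((hasDerivAt_pow 2 r).mul ((hE₁.add hE₂).sub (hE₁.mul hE₂)))).congr_deriv ?_
  simp only [Pi.add_apply, Pi.sub_apply, Pi.mul_apply]
  field_simp
  ring

lemma exp_profile_le {r : ℝ} (hr : 0 < r) :
    exp (sol.profile r) ≤ exp (sol.profile r) + exp (sol.swap.profile r) -
      exp (sol.profile r) * exp (sol.swap.profile r) := by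
  nlinarith [exp_pos (sol.swap.profile r), exp_le_one_iff.2 (sol.profile_neg hr).le]

lemma monotoneOn_pohozaev : MonotoneOn sol.pohozaev (Ioi 0) :=
  monotoneOn_of_hasDerivAt_nonneg (convex_Ioi 0) (fun _ hr => sol.hasDerivAt_pohozaev hr)
    fun _ hr => mul_nonneg (mul_pos two_pos hr).le ((exp_pos _).le.trans (sol.exp_profile_le hr))

lemma tendsto_pohozaev (hβ₁ : 1 < β₁) (hβ₂ : 1 < β₂) :
    Tendsto sol.pohozaev atTop (𝓝 (4 * β₁ * β₂)) := by
  have hsq : Tendsto (fun r => r ^ 2 * (exp (sol.profile r) + exp (sol.swap.profile r) -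
      exp (sol.profile r) * exp (sol.swap.profile r))) atTop (𝓝 0) := by
    have hsum :=
      (sol.tendsto_sq_mul_exp_profile hβ₁).add (sol.swap.tendsto_sq_mul_exp_profile hβ₂)
    rw [add_zero] at hsum
    refine tendsto_of_tendsto_of_tendsto_of_le_of_le' tendsto_const_nhds hsum ?_ ?_
    · filter_upwards [eventually_gt_atTop 0] with r hr
      exact mul_nonneg (sq_nonneg r) ((exp_pos _).le.trans (sol.exp_profile_le hr))
    · filter_upwards with r
      have hE := mul_pos (exp_pos (sol.profile r)) (exp_pos (sol.swap.profile r))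
      nlinarith [mul_nonneg (sq_nonneg r) hE.le]
  have h := (sol.tendsto_flux.mul sol.swap.tendsto_flux).add hsq
  rwa [show -(2 * β₁) * -(2 * β₂) + 0 = 4 * β₁ * β₂ by ring] at h

lemma pohozaev_le (hβ₁ : 1 < β₁) (hβ₂ : 1 < β₂) {r : ℝ} (hr : 0 < r) :
    sol.pohozaev r ≤ 4 * β₁ * β₂ :=
  ge_of_tendsto (sol.tendsto_pohozaev hβ₁ hβ₂) (by
    filter_upwards [eventually_ge_atTop r] with s hs using
      sol.monotoneOn_pohozaev hr (hr.trans_le hs) hs)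

lemma profile_le (hβ₁ : 1 < β₁) (hβ₂ : 1 < β₂) (hε : ε ≤ 1) {r : ℝ} (hr : 1 ≤ r) :
    sol.profile r ≤ -2 * log r +
      log (4 * β₁ * β₂ + fluxBound N₁ β₁ * fluxBound N₂ β₂) := by
  have hr₀ : 0 < r := one_pos.trans_le hr
  have hflux : -(fluxBound N₁ β₁ * fluxBound N₂ β₂) ≤ sol.flux r * sol.swap.flux r := by
    have h := mul_le_mul (sol.abs_flux_le hε hr₀) (sol.swap.abs_flux_le hε hr₀) (abs_nonneg _)
      ((abs_nonneg _).trans (sol.abs_flux_le hε hr₀))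
    rw [← abs_mul] at h
    exact neg_le_of_abs_le h
  have hsq : r ^ 2 * exp (sol.profile r) ≤ 4 * β₁ * β₂ + fluxBound N₁ β₁ * fluxBound N₂ β₂ := by
    have hQ := sol.pohozaev_le hβ₁ hβ₂ hr₀
    have hE := mul_le_mul_of_nonneg_left (sol.exp_profile_le hr₀) (sq_nonneg r)
    rw [pohozaev] at hQ
    linarith
  have hlog := log_le_log (by positivity) hsq
  rw [log_mul (by positivity) (exp_pos _).ne', log_exp, log_pow, Nat.cast_ofNat] at hlog
  linarith

lemma abs_mul_deriv_profile_le (hε : ε ≤ 1) {r : ℝ} (hr : 0 < r) :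
    |r * deriv sol.profile r| ≤ fluxBound N₁ β₁ := by
  rw [(sol.hasDerivAt_profile hr).deriv, mul_div_cancel₀ _ hr.ne']
  exact sol.abs_flux_le hε hr

end RadSol

theorem stmt2_general (N₁ N₂ : ℕ) (β₁ β₂ : ℝ) (hβ₁ : 1 < β₁) (hβ₂ : 1 < β₂) :
    ∃ C : ℝ, ∀ ε ∈ Set.Icc (0 : ℝ) 1, ∀ sol : RadSol N₁ N₂ β₁ β₂ ε,
      (∀ r : ℝ, 0 < r →
        |r * deriv (fun s : ℝ => 2 * ε * (N₁ : ℝ) * Real.log s + sol.v₁ (s • e₀)) r| ≤ C ∧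
        |r * deriv (fun s : ℝ => 2 * ε * (N₂ : ℝ) * Real.log s + sol.v₂ (s • e₀)) r| ≤ C) ∧
      (∀ r : ℝ, 1 ≤ r →
        2 * ε * (N₁ : ℝ) * Real.log r + sol.v₁ (r • e₀) ≤ -2 * Real.log r + C ∧
        2 * ε * (N₂ : ℝ) * Real.log r + sol.v₂ (r • e₀) ≤ -2 * Real.log r + C) := by
  refine ⟨max (max (fluxBound N₁ β₁) (fluxBound N₂ β₂))
      (log (4 * β₁ * β₂ + fluxBound N₁ β₁ * fluxBound N₂ β₂)),
    fun ε hε sol => ⟨fun r hr => ⟨?_, ?_⟩, fun r hr => ⟨?_, ?_⟩⟩⟩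
  · exact (sol.abs_mul_deriv_profile_le hε.2 hr).trans (le_max_of_le_left (le_max_left _ _))
  · exact (sol.swap.abs_mul_deriv_profile_le hε.2 hr).trans
      (le_max_of_le_left (le_max_right _ _))
  · exact (sol.profile_le hβ₁ hβ₂ hε.2 hr).trans (add_le_add le_rfl (le_max_right _ _))
  · have h := sol.swap.profile_le hβ₂ hβ₁ hε.2 hr
    rw [mul_right_comm 4 β₂, mul_comm (fluxBound N₂ β₂)] at h
    exact h.trans (add_le_add le_rfl (le_max_right _ _))

/-- Uniform estimates `|r Uᵢ'(r)| ≤ C` for `r > 0` and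
`Uᵢ(r) ≤ -2 ln r + C` for `r ≥ 1`, for radial solutions of the deformed
one-point Chern–Simons system, with `C` depending only on `N₁, N₂, β₁, β₂`.
Here `Uᵢ(r)` denotes the radial profile `uᵢ(r • e₀) = 2εNᵢ ln r + vᵢ(r • e₀)`. -/
theorem stmt2 (N₁ N₂ : ℕ) (β₁ β₂ : ℝ) (hβ₁ : 1 < β₁) (hβ₂ : 1 < β₂)
    (hcond : (β₁ - 1) * (β₂ - 1) > ((N₁ : ℝ) + 1) * ((N₂ : ℝ) + 1)) :
    ∃ C : ℝ, ∀ ε ∈ Set.Icc (0 : ℝ) 1, ∀ sol : RadSol N₁ N₂ β₁ β₂ ε,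
      (∀ r : ℝ, 0 < r →
        |r * deriv (fun s : ℝ => 2 * ε * (N₁ : ℝ) * Real.log s + sol.v₁ (s • e₀)) r| ≤ C ∧
        |r * deriv (fun s : ℝ => 2 * ε * (N₂ : ℝ) * Real.log s + sol.v₂ (s • e₀)) r| ≤ C) ∧
      (∀ r : ℝ, 1 ≤ r →
        2 * ε * (N₁ : ℝ) * Real.log r + sol.v₁ (r • e₀) ≤ -2 * Real.log r + C ∧
        2 * ε * (N₂ : ℝ) * Real.log r + sol.v₂ (r • e₀) ≤ -2 * Real.log r + C) :=
  stmt2_general N₁ N₂ β₁ β₂ hβ₁ hβ₂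
end
end

section
/- Let Ω ⊂ ℝ² be a bounded open set and let (u_{1n}, u_{2n}) ∈ C²(Ω)² be a sequence of solutions of Δu_{1n} + V_{1n}e^{u_{2n}} = 0 and Δu_{2n} + V_{2n}e^{u_{1n}} = 0 in Ω, with ‖V_{1n}‖_{L^∞(Ω)} + ‖V_{2n}‖_{L^∞(Ω)} ≤ C₁ and ∫_Ω (e^{u_{1n}} + e^{u_{2n}}) dx ≤ C₂ for all n. If there exist a point x̄ ∈ Ω and a sequence x_{1n} → x̄ with u_{1n}(x_{1n}) → +∞, then there exist a subsequence and a sequence x_{2n} → x̄ along it with u_{2n}(x_{2n}) → +∞. In particular, blow-up of the two components of the system occurs simultaneously at the same points. -/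
/-!
If no subsequence of `u₂ₙ` blew up at `x̄`, then `u₂ₙ ≤ M` on a fixed ball around `x̄` for all
large `n`, so the first equation gives `Δu₁ₙ ≥ -K` there with `K = C₁ e^M`. For such a function,
differentiating circle integrals in the radius (`(ρ g')' = ρ ∫ Δu dθ`) gives the mean value
inequality `u(c) - K R² / 8 ≤ ⨍_{B(c,R)} u`, and Jensen's inequality turns it into
`e^{u(c) - K R²/8} ≤ ⨍_{B(c,R)} e^u ≤ C₂ / (π R²)`. At `c = x₁ₙ` this bounds `u₁ₙ(x₁ₙ)`,
contradicting its blow-up.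
-/

open MeasureTheory Metric Filter

noncomputable section

open Real Set Function Topology

lemma hasDerivAt_intervalIntegral_of_continuousOn {E : Type*} [NormedAddCommGroup E]
    [NormedSpace ℝ E] {F F' : ℝ → ℝ → E} {s : Set ℝ} {x₀ a b : ℝ} (hs : IsOpen s) (hx₀ : x₀ ∈ s)
    (hF : ContinuousOn (uncurry F) (s ×ˢ univ)) (hF' : ContinuousOn (uncurry F') (s ×ˢ univ))
    (hderiv : ∀ x ∈ s, ∀ θ, HasDerivAt (F · θ) (F' x θ) x) :
    HasDerivAt (fun x => ∫ θ in a..b, F x θ) (∫ θ in a..b, F' x₀ θ) x₀ := by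
  obtain ⟨ε, hε, hεs⟩ := nhds_basis_closedBall.mem_iff.1 (hs.mem_nhds hx₀)
  have hcont {G : ℝ → ℝ → E} (hG : ContinuousOn (uncurry G) (s ×ˢ univ)) {x : ℝ} (hx : x ∈ s) :
      Continuous (G x) :=
    hG.comp_continuous (f := fun θ => (x, θ)) (by fun_prop) fun θ => ⟨hx, trivial⟩
  obtain ⟨M, hM⟩ := ((isCompact_closedBall x₀ ε).prod isCompact_uIcc).exists_bound_of_continuousOn
    (hF'.mono (prod_mono hεs (subset_univ _)))
  have hball : ball x₀ ε ⊆ s := ball_subset_closedBall.trans hεs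
  refine (intervalIntegral.hasDerivAt_integral_of_dominated_loc_of_deriv_le (bound := fun _ => M)
    (ball_mem_nhds x₀ hε) ?_ ((hcont hF hx₀).intervalIntegrable _ _)
    (hcont hF' hx₀).aestronglyMeasurable ?_ intervalIntegrable_const ?_).2
  · filter_upwards [isOpen_ball.mem_nhds (mem_ball_self hε)] with x hx
    exact (hcont hF (hball hx)).aestronglyMeasurable
  · refine .of_forall fun θ hθ x hx => hM (x, θ) ⟨ball_subset_closedBall hx, ?_⟩
    exact uIoc_subset_uIcc hθ
  · exact .of_forall fun θ _ x hx => hderiv x (hball hx) θ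

lemma le_of_hasDerivAt_nonneg {f f' : ℝ → ℝ} {a b : ℝ} (hab : a ≤ b)
    (hf : ∀ x ∈ Icc a b, HasDerivAt f (f' x) x) (hf' : ∀ x ∈ Ioo a b, 0 ≤ f' x) : f a ≤ f b := by
  refine monotoneOn_of_hasDerivWithinAt_nonneg (f' := f') (convex_Icc a b)
    (fun x hx => (hf x hx).continuousAt.continuousWithinAt) (fun x hx => ?_) (fun x hx => ?_)
    (left_mem_Icc.2 hab) (right_mem_Icc.2 hab) hab
  · rw [interior_Icc] at hx ⊢
    exact (hf x (Ioo_subset_Icc_self hx)).hasDerivWithinAt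
  · rw [interior_Icc] at hx
    exact hf' x hx

lemma Icc_zero_subset_ball_zero {ρ r : ℝ} (hρr : ρ < r) : Icc 0 ρ ⊆ ball (0 : ℝ) r :=
  fun t ht => by
    rw [mem_ball_zero_iff, norm_eq_abs, abs_of_nonneg ht.1]
    exact ht.2.trans_lt hρr

local notation "e₀" => (EuclideanSpace.single 0 1 : Plane)
local notation "e₁" => (EuclideanSpace.single 1 1 : Plane)

def polarDir (θ : ℝ) : Plane := cos θ • e₀ + sin θ • e₁

def polarDirPerp (θ : ℝ) : Plane := (-sin θ) • e₀ + cos θ • e₁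

lemma norm_smul_single_add_smul_single (a b : ℝ) : ‖a • e₀ + b • e₁‖ = √(a ^ 2 + b ^ 2) := by
  simp [EuclideanSpace.norm_eq, Fin.sum_univ_two, sq_abs]

@[simp]
lemma norm_polarDir (θ : ℝ) : ‖polarDir θ‖ = 1 := by
  rw [polarDir, norm_smul_single_add_smul_single, cos_sq_add_sin_sq, sqrt_one]

lemma hasDerivAt_polarDir (θ : ℝ) : HasDerivAt polarDir (polarDirPerp θ) θ :=
  ((hasDerivAt_cos θ).smul_const e₀).add ((hasDerivAt_sin θ).smul_const e₁)

lemma hasDerivAt_polarDirPerp (θ : ℝ) : HasDerivAt polarDirPerp (-polarDir θ) θ := by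
  refine (((hasDerivAt_sin θ).neg.smul_const e₀).add
    ((hasDerivAt_cos θ).smul_const e₁)).congr_deriv ?_
  simp only [polarDir, neg_add, neg_smul]

@[fun_prop]
lemma continuous_polarDir : Continuous polarDir :=
  continuous_iff_continuousAt.2 fun θ => (hasDerivAt_polarDir θ).continuousAt

lemma continuous_polarDirPerp : Continuous polarDirPerp :=
  continuous_iff_continuousAt.2 fun θ => (hasDerivAt_polarDirPerp θ).continuousAt

lemma add_smul_polarDir_mem_ball_iff (c : Plane) (ρ θ r : ℝ) :
    c + ρ • polarDir θ ∈ ball c r ↔ ρ ∈ ball 0 r := by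
  simp [norm_smul]

lemma add_smul_polarDir_mem_closedBall_iff (c : Plane) (ρ θ r : ℝ) :
    c + ρ • polarDir θ ∈ closedBall c r ↔ ρ ∈ closedBall 0 r := by
  simp [norm_smul]

lemma ContinuousOn.comp_add_smul_polarDir {X : Type*} [TopologicalSpace X] {Φ : Plane → X}
    {c : Plane} {r : ℝ} (hΦ : ContinuousOn Φ (ball c r)) :
    ContinuousOn (fun q : ℝ × ℝ => Φ (c + q.1 • polarDir q.2)) (ball 0 r ×ˢ univ) :=
  hΦ.comp (by fun_prop) fun q hq => (add_smul_polarDir_mem_ball_iff ..).2 hq.1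

lemma ContinuousOn.continuous_comp_add_smul_polarDir {X : Type*} [TopologicalSpace X]
    {Φ : Plane → X} {c : Plane} {r ρ : ℝ} (hΦ : ContinuousOn Φ (ball c r)) (hρ : ρ ∈ ball 0 r) :
    Continuous fun θ => Φ (c + ρ • polarDir θ) :=
  hΦ.comp_continuous (by fun_prop) fun θ => (add_smul_polarDir_mem_ball_iff c ρ θ r).2 hρ

lemma lap_eq_fderiv_fderiv (u : Plane → ℝ) (x : Plane) :
    lap u x = fderiv ℝ (fderiv ℝ u) x e₀ e₀ + fderiv ℝ (fderiv ℝ u) x e₁ e₁ := by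
  rw [lap, Fin.sum_univ_two, iteratedFDeriv_two_apply, iteratedFDeriv_two_apply]

lemma apply_polarDir_add_apply_polarDirPerp (B : Plane →L[ℝ] Plane →L[ℝ] ℝ) (θ : ℝ) :
    B (polarDir θ) (polarDir θ) + B (polarDirPerp θ) (polarDirPerp θ) = B e₀ e₀ + B e₁ e₁ := by
  simp only [polarDir, polarDirPerp, map_add, map_smul, add_apply,
    smul_apply, smul_eq_mul]
  linear_combination (B e₀ e₀ + B e₁ e₁) * sin_sq_add_cos_sq θ

lemma hasDerivAt_add_smul_polarDir_radial (c : Plane) (ρ θ : ℝ) :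
    HasDerivAt (fun t : ℝ => c + t • polarDir θ) (polarDir θ) ρ := by
  simpa using ((hasDerivAt_id ρ).smul_const (polarDir θ)).const_add c

lemma hasDerivAt_add_smul_polarDir_angular (c : Plane) (ρ θ : ℝ) :
    HasDerivAt (fun t : ℝ => c + ρ • polarDir t) (ρ • polarDirPerp θ) θ :=
  ((hasDerivAt_polarDir θ).const_smul ρ).const_add c

section CircleCalculus

variable {u : Plane → ℝ} {c : Plane} {r K : ℝ}

local notation "u'" => fderiv ℝ u
local notation "u''" => fderiv ℝ (fderiv ℝ u)

lemma hasDerivAt_integral_circle (hu : ContDiffOn ℝ 2 u (ball c r)) {ρ : ℝ} (hρ : ρ ∈ ball 0 r) :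
    HasDerivAt (fun ρ => ∫ θ in (-π)..π, u (c + ρ • polarDir θ))
      (∫ θ in (-π)..π, u' (c + ρ • polarDir θ) (polarDir θ)) ρ := by
  refine hasDerivAt_intervalIntegral_of_continuousOn (F := fun ρ θ => u (c + ρ • polarDir θ))
    (F' := fun ρ θ => u' (c + ρ • polarDir θ) (polarDir θ))
    isOpen_ball hρ hu.continuousOn.comp_add_smul_polarDir ?_ fun x hx θ => ?_
  · exact (hu.continuousOn_fderiv_of_isOpen isOpen_ball one_le_two).comp_add_smul_polarDir.clm_apply
      (by fun_prop)
  · have hmem := (add_smul_polarDir_mem_ball_iff c x θ r).2 hx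
    have hd := ((hu.differentiableOn two_ne_zero).differentiableAt (isOpen_ball.mem_nhds hmem))
    exact hd.hasFDerivAt.comp_hasDerivAt x (hasDerivAt_add_smul_polarDir_radial c x θ)

lemma hasDerivAt_integral_circle_fderiv (hu : ContDiffOn ℝ 2 u (ball c r)) {ρ : ℝ}
    (hρ : ρ ∈ ball 0 r) :
    HasDerivAt (fun ρ => ∫ θ in (-π)..π, u' (c + ρ • polarDir θ) (polarDir θ))
      (∫ θ in (-π)..π, u'' (c + ρ • polarDir θ) (polarDir θ) (polarDir θ)) ρ := by
  have hu₁ : ContDiffOn ℝ 1 u' (ball c r) := hu.fderiv_of_isOpen isOpen_ball le_rfl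
  refine hasDerivAt_intervalIntegral_of_continuousOn
    (F := fun ρ θ => u' (c + ρ • polarDir θ) (polarDir θ))
    (F' := fun ρ θ => u'' (c + ρ • polarDir θ) (polarDir θ) (polarDir θ))
    isOpen_ball hρ ?_ ?_ fun x hx θ => ?_
  · exact hu₁.continuousOn.comp_add_smul_polarDir.clm_apply (by fun_prop)
  · exact ((hu₁.continuousOn_fderiv_of_isOpen isOpen_ball le_rfl).comp_add_smul_polarDir.clm_apply
      (by fun_prop)).clm_apply (by fun_prop)
  · have hmem := (add_smul_polarDir_mem_ball_iff c x θ r).2 hx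
    have hd := (hu₁.differentiableOn one_ne_zero).differentiableAt (isOpen_ball.mem_nhds hmem)
    have h : HasDerivAt (fun t => u' (c + t • polarDir θ))
        (u'' (c + x • polarDir θ) (polarDir θ)) x :=
      hd.hasFDerivAt.comp_hasDerivAt x (hasDerivAt_add_smul_polarDir_radial c x θ)
    simpa using h.clm_apply (hasDerivAt_const x (polarDir θ))

lemma mul_integral_circle_perp (hu : ContDiffOn ℝ 2 u (ball c r)) {ρ : ℝ} (hρ : ρ ∈ ball 0 r) :
    ρ * ∫ θ in (-π)..π, u'' (c + ρ • polarDir θ) (polarDirPerp θ) (polarDirPerp θ) =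
      ∫ θ in (-π)..π, u' (c + ρ • polarDir θ) (polarDir θ) := by
  have hu₁ : ContDiffOn ℝ 1 u' (ball c r) := hu.fderiv_of_isOpen isOpen_ball le_rfl
  -- `θ ↦ u' (c + ρ • polarDir θ) (polarDirPerp θ)` is `2π`-periodic: its derivative integrates to 0
  have hderiv θ : HasDerivAt (fun t => u' (c + ρ • polarDir t) (polarDirPerp t))
      (ρ * u'' (c + ρ • polarDir θ) (polarDirPerp θ) (polarDirPerp θ) -
        u' (c + ρ • polarDir θ) (polarDir θ)) θ := by
    have hmem := (add_smul_polarDir_mem_ball_iff c ρ θ r).2 hρ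
    have hd := (hu₁.differentiableOn one_ne_zero).differentiableAt (isOpen_ball.mem_nhds hmem)
    have h : HasDerivAt (fun t => u' (c + ρ • polarDir t))
        (u'' (c + ρ • polarDir θ) (ρ • polarDirPerp θ)) θ :=
      hd.hasFDerivAt.comp_hasDerivAt θ (hasDerivAt_add_smul_polarDir_angular c ρ θ)
    refine (h.clm_apply (hasDerivAt_polarDirPerp θ)).congr_deriv ?_
    simp only [map_smul, map_neg, smul_apply, smul_eq_mul]
    ring
  have hcont₂ :
      Continuous fun θ => ρ * u'' (c + ρ • polarDir θ) (polarDirPerp θ) (polarDirPerp θ) :=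
    continuous_const.mul <| (((hu₁.continuousOn_fderiv_of_isOpen isOpen_ball le_rfl
      ).continuous_comp_add_smul_polarDir hρ).clm_apply continuous_polarDirPerp).clm_apply
      continuous_polarDirPerp
  have hcont₁ : Continuous fun θ => u' (c + ρ • polarDir θ) (polarDir θ) :=
    (hu₁.continuousOn.continuous_comp_add_smul_polarDir hρ).clm_apply continuous_polarDir
  have hftc := intervalIntegral.integral_eq_sub_of_hasDerivAt (a := -π) (b := π)
    (fun θ _ => hderiv θ) ((hcont₂.sub hcont₁).intervalIntegrable _ _)
  rw [intervalIntegral.integral_sub (hcont₂.intervalIntegrable _ _)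
    (hcont₁.intervalIntegrable _ _), intervalIntegral.integral_const_mul] at hftc
  have hper : polarDir π = polarDir (-π) ∧ polarDirPerp π = polarDirPerp (-π) := by
    simp [polarDir, polarDirPerp]
  rw [hper.1, hper.2, sub_self] at hftc
  linarith

lemma neg_two_pi_mul_le_integral_circle_fderiv_fderiv (hu : ContDiffOn ℝ 2 u (ball c r))
    (hK : ∀ x ∈ ball c r, -K ≤ lap u x) {ρ : ℝ} (hρ : ρ ∈ ball 0 r) :
    -(2 * π * K) ≤ (∫ θ in (-π)..π, u'' (c + ρ • polarDir θ) (polarDir θ) (polarDir θ)) +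
      ∫ θ in (-π)..π, u'' (c + ρ • polarDir θ) (polarDirPerp θ) (polarDirPerp θ) := by
  have hu₂ : ContinuousOn u'' (ball c r) :=
    (hu.fderiv_of_isOpen isOpen_ball le_rfl).continuousOn_fderiv_of_isOpen isOpen_ball le_rfl
  have hcont {v : ℝ → Plane} (hv : Continuous v) :
      Continuous fun θ => u'' (c + ρ • polarDir θ) (v θ) (v θ) :=
    ((hu₂.continuous_comp_add_smul_polarDir hρ).clm_apply hv).clm_apply hv
  rw [← intervalIntegral.integral_add ((hcont continuous_polarDir).intervalIntegrable _ _)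
    ((hcont continuous_polarDirPerp).intervalIntegrable _ _)]
  calc -(2 * π * K) = ∫ _ in (-π)..π, -K := by
        rw [intervalIntegral.integral_const, smul_eq_mul]; ring
    _ ≤ _ := by
      refine intervalIntegral.integral_mono_on (by linarith [pi_pos]) intervalIntegrable_const
        (((hcont continuous_polarDir).add (hcont continuous_polarDirPerp)).intervalIntegrable _ _)
        fun θ _ => ?_
      rw [apply_polarDir_add_apply_polarDirPerp, ← lap_eq_fderiv_fderiv]
      exact hK _ ((add_smul_polarDir_mem_ball_iff c ρ θ r).2 hρ)

lemma neg_pi_mul_le_integral_circle_fderiv (hu : ContDiffOn ℝ 2 u (ball c r))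
    (hK : ∀ x ∈ ball c r, -K ≤ lap u x) {ρ : ℝ} (hρ : 0 < ρ) (hρr : ρ < r) :
    -(π * K * ρ) ≤ ∫ θ in (-π)..π, u' (c + ρ • polarDir θ) (polarDir θ) := by
  set G := fun t : ℝ => ∫ θ in (-π)..π, u' (c + t • polarDir θ) (polarDir θ)
  set A := fun t : ℝ => ∫ θ in (-π)..π, u'' (c + t • polarDir θ) (polarDir θ) (polarDir θ)
  set W := fun t : ℝ => ∫ θ in (-π)..π, u'' (c + t • polarDir θ) (polarDirPerp θ) (polarDirPerp θ)
  -- `(t G)' = G + t A = t (A + W)` because `t W = G`, and `A + W ≥ -2πK`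
  have hmono : (0 * G 0 + π * K * 0 ^ 2) ≤ ρ * G ρ + π * K * ρ ^ 2 := by
    refine le_of_hasDerivAt_nonneg (f := fun t => t * G t + π * K * t ^ 2)
      (f' := fun t => t * (A t + W t + 2 * π * K)) hρ.le
      (fun t ht => ?_) fun t ht => ?_
    · have ht' := Icc_zero_subset_ball_zero hρr ht
      refine (((hasDerivAt_id t).mul (hasDerivAt_integral_circle_fderiv hu ht')).add
        ((hasDerivAt_pow 2 t).const_mul (π * K))).congr_deriv ?_
      have h : t * W t = ∫ θ in (-π)..π, u' (c + t • polarDir θ) (polarDir θ) :=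
        mul_integral_circle_perp hu ht'
      simp only [id, Nat.cast_ofNat]
      linear_combination -h
    · have := neg_two_pi_mul_le_integral_circle_fderiv_fderiv hu hK
        (Icc_zero_subset_ball_zero hρr (Ioo_subset_Icc_self ht))
      exact mul_nonneg ht.1.le (by linarith)
  nlinarith

lemma two_pi_mul_sub_le_integral_circle (hu : ContDiffOn ℝ 2 u (ball c r))
    (hK : ∀ x ∈ ball c r, -K ≤ lap u x) {ρ : ℝ} (hρ : 0 ≤ ρ) (hρr : ρ < r) :
    2 * π * u c - π * K * ρ ^ 2 / 2 ≤ ∫ θ in (-π)..π, u (c + ρ • polarDir θ) := by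
  have hmono : (∫ θ in (-π)..π, u (c + (0 : ℝ) • polarDir θ)) + π * K * 0 ^ 2 / 2 ≤
      (∫ θ in (-π)..π, u (c + ρ • polarDir θ)) + π * K * ρ ^ 2 / 2 := by
    refine le_of_hasDerivAt_nonneg
      (f := fun t => (∫ θ in (-π)..π, u (c + t • polarDir θ)) + π * K * t ^ 2 / 2)
      (f' := fun t => (∫ θ in (-π)..π, u' (c + t • polarDir θ) (polarDir θ)) + π * K * t) hρ
      (fun t ht => ?_) fun t ht => ?_
    · refine ((hasDerivAt_integral_circle hu (Icc_zero_subset_ball_zero hρr ht)).add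
        (((hasDerivAt_pow 2 t).const_mul (π * K)).div_const 2)).congr_deriv ?_
      simp only [Nat.cast_ofNat]
      ring
    · have := neg_pi_mul_le_integral_circle_fderiv hu hK ht.1 (ht.2.trans hρr)
      linarith
  simp only [zero_smul, add_zero, intervalIntegral.integral_const, smul_eq_mul] at hmono
  linarith

end CircleCalculus

lemma orthonormalBasisOneI_repr_polarCoord_symm (p : ℝ × ℝ) :
    Complex.orthonormalBasisOneI.repr (Complex.polarCoord.symm p) = p.1 • polarDir p.2 := by
  ext i
  fin_cases i <;>
    simp [polarDir, Complex.polarCoord_symm_apply, Complex.cos_ofReal_re, Complex.sin_ofReal_re]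

lemma integral_eq_integral_polarCoord (f : Plane → ℝ) (c : Plane) :
    ∫ x, f x = ∫ p in polarCoord.target, p.1 * f (c + p.1 • polarDir p.2) := by
  rw [← integral_add_left_eq_self f c,
    ← (LinearIsometryEquiv.measurePreserving Complex.orthonormalBasisOneI.repr).integral_comp
      Complex.orthonormalBasisOneI.repr.toHomeomorph.measurableEmbedding,
    ← Complex.integral_comp_polarCoord_symm]
  simp only [orthonormalBasisOneI_repr_polarCoord_symm, smul_eq_mul]

lemma setIntegral_ball_eq_integral_polar {w : Plane → ℝ} {c : Plane} {R : ℝ} (hR : 0 ≤ R)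
    (hw : ContinuousOn w (closedBall c R)) :
    ∫ x in ball c R, w x = ∫ ρ in 0..R, ρ * ∫ θ in (-π)..π, w (c + ρ • polarDir θ) := by
  have hind (p : ℝ × ℝ) : p.1 * (ball c R).indicator w (c + p.1 • polarDir p.2) =
      (ball 0 R ×ˢ univ).indicator (fun p : ℝ × ℝ => p.1 * w (c + p.1 • polarDir p.2)) p := by
    by_cases hp : p.1 ∈ ball 0 R
    · rw [indicator_of_mem ((add_smul_polarDir_mem_ball_iff ..).2 hp),
        indicator_of_mem (mk_mem_prod hp (mem_univ _))]
    · rw [indicator_of_notMem (mt (add_smul_polarDir_mem_ball_iff ..).1 hp),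
        indicator_of_notMem fun h => hp h.1, mul_zero]
  have hset : polarCoord.target ∩ ball 0 R ×ˢ univ = Ioo 0 R ×ˢ Ioo (-π) π := by
    ext ⟨ρ, θ⟩
    simp only [polarCoord_target, mem_inter_iff, mem_prod, mem_Ioi, mem_Ioo, mem_ball_zero_iff,
      norm_eq_abs, mem_univ, and_true, abs_lt]
    constructor
    · rintro ⟨⟨h0, hθ⟩, -, hR⟩
      exact ⟨⟨h0, hR⟩, hθ⟩
    · rintro ⟨⟨h0, hR⟩, hθ⟩
      exact ⟨⟨h0, hθ⟩, by linarith, hR⟩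
  have hint : IntegrableOn (fun p : ℝ × ℝ => p.1 * w (c + p.1 • polarDir p.2))
      (Icc 0 R ×ˢ Icc (-π) π) := by
    refine ContinuousOn.integrableOn_compact (isCompact_Icc.prod isCompact_Icc)
      (continuousOn_fst.mul (hw.comp (by fun_prop) fun p hp => ?_))
    rw [add_smul_polarDir_mem_closedBall_iff, mem_closedBall_zero_iff, norm_eq_abs,
      abs_of_nonneg hp.1.1]
    exact hp.1.2
  rw [← integral_indicator measurableSet_ball, integral_eq_integral_polarCoord _ c]
  simp_rw [hind]
  rw [setIntegral_indicator (measurableSet_ball.prod MeasurableSet.univ), hset,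
    Measure.volume_eq_prod, setIntegral_prod _
      (hint.mono_set (prod_mono Ioo_subset_Icc_self Ioo_subset_Icc_self)),
    intervalIntegral.integral_of_le hR, ← integral_Ioc_eq_integral_Ioo]
  refine setIntegral_congr_fun measurableSet_Ioc fun ρ _ => ?_
  rw [integral_const_mul, intervalIntegral.integral_of_le (by linarith [pi_pos]),
    integral_Ioc_eq_integral_Ioo]

lemma measureReal_ball_fin_two (c : Plane) {R : ℝ} (hR : 0 ≤ R) :
    volume.real (ball c R) = π * R ^ 2 := by
  rw [measureReal_def, EuclideanSpace.volume_ball_fin_two, ENNReal.toReal_mul, ENNReal.toReal_pow,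
    ENNReal.toReal_ofReal hR, ENNReal.toReal_ofReal pi_nonneg, mul_comm]

section MeanValue

variable {u : Plane → ℝ} {c : Plane} {r R K : ℝ}

lemma sub_le_setAverage_ball (hu : ContDiffOn ℝ 2 u (ball c r))
    (hK : ∀ x ∈ ball c r, -K ≤ lap u x) (hR : 0 < R) (hRr : R < r) :
    u c - K * R ^ 2 / 8 ≤ ⨍ x in ball c R, u x := by
  have hball : closedBall c R ⊆ ball c r := closedBall_subset_ball hRr
  have hcont : ContinuousOn (fun ρ => ρ * ∫ θ in (-π)..π, u (c + ρ • polarDir θ)) (Icc 0 R) :=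
    continuousOn_id.mul fun t ht => (hasDerivAt_integral_circle hu
      (Icc_zero_subset_ball_zero hRr ht)).continuousAt.continuousWithinAt
  have hlow : ∫ ρ in 0..R, (2 * π * u c * ρ - π * K / 2 * ρ ^ 3) ≤ ∫ x in ball c R, u x := by
    rw [setIntegral_ball_eq_integral_polar hR.le (hu.continuousOn.mono hball)]
    refine intervalIntegral.integral_mono_on hR.le
      ((by fun_prop : Continuous _).intervalIntegrable _ _)
      (hcont.intervalIntegrable_of_Icc hR.le) fun ρ hρ => ?_
    have := two_pi_mul_sub_le_integral_circle hu hK hρ.1 (hρ.2.trans_lt hRr)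
    nlinarith [hρ.1]
  rw [setAverage_eq, measureReal_ball_fin_two c hR.le, smul_eq_mul, le_inv_mul_iff₀ (by positivity)]
  have hcalc : ∫ ρ in 0..R, (2 * π * u c * ρ - π * K / 2 * ρ ^ 3) =
      π * R ^ 2 * (u c - K * R ^ 2 / 8) := by
    rw [intervalIntegral.integral_sub ((continuous_const_mul _).intervalIntegrable _ _)
      ((by fun_prop : Continuous fun ρ : ℝ => π * K / 2 * ρ ^ 3).intervalIntegrable _ _),
      intervalIntegral.integral_const_mul, intervalIntegral.integral_const_mul, integral_id,
      integral_pow]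
    ring
  linarith

lemma exp_sub_le_setAverage_exp (hu : ContDiffOn ℝ 2 u (ball c r))
    (hK : ∀ x ∈ ball c r, -K ≤ lap u x) (hR : 0 < R) (hRr : R < r) :
    exp (u c - K * R ^ 2 / 8) ≤ ⨍ x in ball c R, exp (u x) := by
  have hcont : ContinuousOn u (closedBall c R) := hu.continuousOn.mono (closedBall_subset_ball hRr)
  have hint {f : Plane → ℝ} (hf : ContinuousOn f (closedBall c R)) : IntegrableOn f (ball c R) :=
    (hf.integrableOn_compact (isCompact_closedBall c R)).mono_set ball_subset_closedBall
  exact (exp_le_exp.2 (sub_le_setAverage_ball hu hK hR hRr)).trans <|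
    convexOn_exp.map_set_average_le continuousOn_exp isClosed_univ (measure_ball_pos _ c hR).ne'
      measure_ball_lt_top.ne (.of_forall fun _ => mem_univ _) (hint hcont)
      (hint (continuous_exp.comp_continuousOn hcont))

end MeanValue

lemma exists_ball_eventually_le_of_not_exists_blowup {X : Type*} [PseudoMetricSpace X]
    (f : ℕ → X → ℝ) {s : Set X} {x₀ : X} (hs : s ∈ 𝓝 x₀)
    (h : ¬ ∃ φ : ℕ → ℕ, StrictMono φ ∧ ∃ x : ℕ → X, (∀ n, x n ∈ s) ∧
      Tendsto x atTop (𝓝 x₀) ∧ Tendsto (fun n => f (φ n) (x n)) atTop atTop) :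
    ∃ δ > 0, ∃ M : ℝ, ∀ᶠ n in atTop, ∀ x ∈ ball x₀ δ, f n x ≤ M := by
  obtain ⟨ε, hε, hεs⟩ := Metric.mem_nhds_iff.1 hs
  by_contra! H
  have hfreq (k : ℕ) : ∃ᶠ n in atTop, ∃ x ∈ ball x₀ (min ε (1 / (k + 1))), (k : ℝ) < f n x :=
    H _ (lt_min hε (by positivity)) k
  obtain ⟨φ, hφ, hφk⟩ := extraction_forall_of_frequently hfreq
  choose x hx hfx using hφk
  refine h ⟨φ, hφ, x, fun k => hεs (ball_subset_ball (min_le_left _ _) (hx k)), ?_,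
    tendsto_atTop_mono (fun k => (hfx k).le) tendsto_natCast_atTop_atTop⟩
  refine tendsto_iff_dist_tendsto_zero.2 (squeeze_zero (fun _ => dist_nonneg) (fun k => ?_)
    tendsto_one_div_add_atTop_nhds_zero_nat)
  exact (mem_ball.1 (hx k)).le.trans (min_le_right _ _)

lemma exp_sub_le_div_of_neg_le_lap {u : Plane → ℝ} {Ω : Set Plane} {c : Plane} {r R K C : ℝ}
    (hu : ContDiffOn ℝ 2 u Ω) (hcΩ : ball c r ⊆ Ω) (hK : ∀ x ∈ ball c r, -K ≤ lap u x)
    (hR : 0 < R) (hRr : R < r) (hint : IntegrableOn (fun x => exp (u x)) Ω)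
    (hC : ∫ x in Ω, exp (u x) ≤ C) :
    exp (u c - K * R ^ 2 / 8) ≤ C / (π * R ^ 2) := by
  have hmass : ∫ x in ball c R, exp (u x) ≤ C :=
    (setIntegral_mono_set hint (.of_forall fun x => (exp_pos _).le)
      (.of_forall ((ball_subset_ball hRr.le).trans hcΩ))).trans hC
  calc exp (u c - K * R ^ 2 / 8) ≤ ⨍ x in ball c R, exp (u x) :=
        exp_sub_le_setAverage_exp (hu.mono hcΩ) hK hR hRr
    _ ≤ C / (π * R ^ 2) := by
        rw [setAverage_eq, measureReal_ball_fin_two c hR.le, smul_eq_mul, inv_mul_eq_div]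
        gcongr

theorem stmt7_general (Ω : Set Plane) (hΩo : IsOpen Ω)
    (u₁ u₂ V₁ V₂ : ℕ → Plane → ℝ) (C₁ C₂ : ℝ)
    (hcd₁ : ∀ n, ContDiffOn ℝ 2 (u₁ n) Ω)
    (hpde₁ : ∀ n, ∀ x ∈ Ω, lap (u₁ n) x + V₁ n x * Real.exp (u₂ n x) = 0)
    (hV : ∀ n, ∀ x ∈ Ω, |V₁ n x| + |V₂ n x| ≤ C₁)
    (hint₁ : ∀ n, IntegrableOn (fun x => Real.exp (u₁ n x)) Ω)
    (hint₂ : ∀ n, IntegrableOn (fun x => Real.exp (u₂ n x)) Ω)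
    (hmass : ∀ n, (∫ x in Ω, (Real.exp (u₁ n x) + Real.exp (u₂ n x))) ≤ C₂)
    (xbar : Plane) (hxbar : xbar ∈ Ω) (x₁ : ℕ → Plane)
    (hx₁ : Tendsto x₁ atTop (nhds xbar))
    (hblow : Tendsto (fun n => u₁ n (x₁ n)) atTop atTop) :
    ∃ φ : ℕ → ℕ, StrictMono φ ∧
      ∃ x₂ : ℕ → Plane, (∀ n, x₂ n ∈ Ω) ∧ Tendsto x₂ atTop (nhds xbar) ∧
        Tendsto (fun n => u₂ (φ n) (x₂ n)) atTop atTop := by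
  by_contra hcon
  obtain ⟨δ, hδ, M, hu₂M⟩ :=
    exists_ball_eventually_le_of_not_exists_blowup u₂ (hΩo.mem_nhds hxbar) hcon
  obtain ⟨ε, hε, hεΩ⟩ := Metric.isOpen_iff.1 hΩo xbar hxbar
  set r := min δ ε / 2 with hr_def
  have hr : 0 < r := by positivity
  -- where `u₂ n ≤ M`, the first equation gives `Δu₁ₙ ≥ -C₁ e^M`
  have hbound : ∀ᶠ n in atTop,
      exp (u₁ n (x₁ n) - C₁ * exp M * (r / 2) ^ 2 / 8) ≤ C₂ / (π * (r / 2) ^ 2) := by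
    filter_upwards [hu₂M, hx₁ (ball_mem_nhds xbar hr)] with n hn hxn
    have hsub : ball (x₁ n) r ⊆ ball xbar (min δ ε) :=
      ball_subset_ball' (by rw [mem_preimage, mem_ball] at hxn; linarith [hr_def])
    have hΩ : ball (x₁ n) r ⊆ Ω := hsub.trans ((ball_subset_ball (min_le_right _ _)).trans hεΩ)
    refine exp_sub_le_div_of_neg_le_lap (hcd₁ n) hΩ (fun x hx => ?_) (half_pos hr)
      (half_lt_self hr) (hint₁ n) ((setIntegral_mono (hint₁ n) ((hint₁ n).add (hint₂ n))
        fun x => le_add_of_nonneg_right (exp_pos _).le).trans (hmass n))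
    have hM := exp_le_exp.2 (hn x (ball_subset_ball (min_le_left _ _) (hsub hx)))
    have hpde := hpde₁ n x (hΩ hx)
    have hVx := hV n x (hΩ hx)
    nlinarith [le_abs_self (V₁ n x), abs_nonneg (V₁ n x), abs_nonneg (V₂ n x), exp_pos (u₂ n x)]
  obtain ⟨n, hle, hgt⟩ := (hbound.and ((tendsto_exp_atTop.comp
    (tendsto_atTop_add_const_right _ _ hblow)).eventually_gt_atTop _)).exists
  exact hle.not_gt hgt

/-- Simultaneous blow-up for the skew-symmetric system
`Δu₁ₙ + V₁ₙ e^{u₂ₙ} = 0`, `Δu₂ₙ + V₂ₙ e^{u₁ₙ} = 0` in a bounded open `Ω ⊂ ℝ²`: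
if the first component blows up at a point `xbar ∈ Ω` along a sequence `x₁ₙ → xbar`,
then along a subsequence the second component blows up at `xbar` as well. -/
theorem stmt7 (Ω : Set Plane) (hΩo : IsOpen Ω) (hΩb : Bornology.IsBounded Ω)
    (u₁ u₂ V₁ V₂ : ℕ → Plane → ℝ) (C₁ C₂ : ℝ)
    (hcd₁ : ∀ n, ContDiffOn ℝ 2 (u₁ n) Ω) (hcd₂ : ∀ n, ContDiffOn ℝ 2 (u₂ n) Ω)
    (hmV₁ : ∀ n, Measurable (V₁ n)) (hmV₂ : ∀ n, Measurable (V₂ n))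
    (hpde₁ : ∀ n, ∀ x ∈ Ω, lap (u₁ n) x + V₁ n x * Real.exp (u₂ n x) = 0)
    (hpde₂ : ∀ n, ∀ x ∈ Ω, lap (u₂ n) x + V₂ n x * Real.exp (u₁ n x) = 0)
    (hV : ∀ n, ∀ x ∈ Ω, |V₁ n x| + |V₂ n x| ≤ C₁)
    (hint₁ : ∀ n, IntegrableOn (fun x => Real.exp (u₁ n x)) Ω)
    (hint₂ : ∀ n, IntegrableOn (fun x => Real.exp (u₂ n x)) Ω)
    (hmass : ∀ n, (∫ x in Ω, (Real.exp (u₁ n x) + Real.exp (u₂ n x))) ≤ C₂)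
    (xbar : Plane) (hxbar : xbar ∈ Ω) (x₁ : ℕ → Plane) (hx₁Ω : ∀ n, x₁ n ∈ Ω)
    (hx₁ : Tendsto x₁ atTop (nhds xbar))
    (hblow : Tendsto (fun n => u₁ n (x₁ n)) atTop atTop) :
    ∃ φ : ℕ → ℕ, StrictMono φ ∧
      ∃ x₂ : ℕ → Plane, (∀ n, x₂ n ∈ Ω) ∧ Tendsto x₂ atTop (nhds xbar) ∧
        Tendsto (fun n => u₂ (φ n) (x₂ n)) atTop atTop :=
  stmt7_general Ω hΩo u₁ u₂ V₁ V₂ C₁ C₂ hcd₁ hpde₁ hV hint₁ hint₂ hmass xbar hxbar x₁ hx₁ hblow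
end
end

section
/- Let N₁, N₂ ≥ 0 be integers with max(N₁, N₂) ≥ 1, let β₁, β₂ > 1 be real numbers with (β₁−1)(β₂−1) > (N₁+1)(N₂+1), and let k ≥ 2 be an integer such that N₁/(β₁+N₁) + N₂/(β₂+N₂) = (k−1)/k. Then k ≤ max(N₁, N₂). -/
/-- If `N₁, N₂ ≥ 0` with `max(N₁,N₂) ≥ 1`, `β₁, β₂ > 1` with
`(β₁-1)(β₂-1) > (N₁+1)(N₂+1)`, and `k ≥ 2` is an integer with
`N₁/(β₁+N₁) + N₂/(β₂+N₂) = (k-1)/k`, then `k ≤ max(N₁,N₂)`. -/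
theorem stmt17 (N₁ N₂ k : ℕ) (β₁ β₂ : ℝ)
    (hN : 1 ≤ max N₁ N₂) (hβ₁ : 1 < β₁) (hβ₂ : 1 < β₂)
    (hcond : (β₁ - 1) * (β₂ - 1) > ((N₁ : ℝ) + 1) * ((N₂ : ℝ) + 1))
    (hk : 2 ≤ k)
    (heq : (N₁ : ℝ) / (β₁ + N₁) + (N₂ : ℝ) / (β₂ + N₂) = ((k : ℝ) - 1) / k) :
    k ≤ max N₁ N₂ := by
  have hn1 : (0:ℝ) ≤ (N₁:ℝ) := Nat.cast_nonneg _
  have hn2 : (0:ℝ) ≤ (N₂:ℝ) := Nat.cast_nonneg _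
  have h1 : (0:ℝ) < β₁ + N₁ := by linarith
  have h2 : (0:ℝ) < β₂ + N₂ := by linarith
  have hk2 : (2:ℝ) ≤ (k:ℝ) := by exact_mod_cast hk
  have hk0 : (0:ℝ) < k := by linarith
  -- clear denominators in heq
  have heq' : (k:ℝ) * ((N₁:ℝ) * (β₂ + N₂) + (N₂:ℝ) * (β₁ + N₁))
      = ((k:ℝ) - 1) * ((β₁ + N₁) * (β₂ + N₂)) := by
    have h1' : (β₁ + N₁) ≠ 0 := ne_of_gt h1
    have h2' : (β₂ + N₂) ≠ 0 := ne_of_gt h2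
    have hk' : (k:ℝ) ≠ 0 := ne_of_gt hk0
    field_simp at heq
    linarith [heq]
  set M := max N₁ N₂ with hM
  have hM1 : (N₁:ℝ) ≤ (M:ℝ) := by exact_mod_cast le_max_left N₁ N₂
  have hM2 : (N₂:ℝ) ≤ (M:ℝ) := by exact_mod_cast le_max_right N₁ N₂
  have hM0 : (1:ℝ) ≤ (M:ℝ) := by exact_mod_cast hN
  -- key: k - 1 < M
  have hsum : β₁ + β₂ + N₁ + N₂ < β₁ * β₂ - N₁ * N₂ := by nlinarith
  have hP : (k:ℝ) * (β₁ * β₂ - (N₁:ℝ) * N₂) = (β₁ + N₁) * (β₂ + N₂) := by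
    nlinarith [heq']
  have key : (k:ℝ) - 1 < (M:ℝ) := by
    nlinarith [mul_nonneg (mul_nonneg hk0.le (sub_nonneg.2 hM1)) h2.le,
      mul_nonneg (mul_nonneg hk0.le (sub_nonneg.2 hM2)) h1.le,
      mul_pos hk0 (lt_of_le_of_lt (by linarith : (0:ℝ) ≤ β₁ + β₂ + N₁ + N₂) hsum),
      mul_lt_mul_of_pos_left hsum (mul_pos hk0 (lt_of_lt_of_le zero_lt_one hM0))]
  have : (k:ℝ) < (M:ℝ) + 1 := by linarith
  have : k < M + 1 := by exact_mod_cast this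
  omega
end
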